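/- arXiv:2301.06164 — 2 statements merged into one kernel-verified Lean document; each statement's English description precedes it below -/
import Mathlib

section
/- For any m×m real matrix A and orthogonal matrix R ∈ O(m), tr(AᵀR) ≤ tr(D), where A = UDVᵀ is a singular value decomposition of A (D diagonal with nonnegative entries, U, V orthogonal); moreover, the bound is attained by R = UVᵀ. -/
open Matrix

noncomputable def frobSq {n m : ℕ} (A : Matrix (Fin n) (Fin m) ℝ) : ℝ :=
  Matrix.trace (Aᵀ * A)

noncomputable def frobNorm {n m : ℕ} (A : Matrix (Fin n) (Fin m) ℝ) : ℝ :=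
  Real.sqrt (frobSq A)

theorem stmt9 (m : ℕ) (A U D V : Matrix (Fin m) (Fin m) ℝ)
    (hU : Uᵀ * U = 1) (hV : Vᵀ * V = 1) (hD : D.IsDiag)
    (hDpos : ∀ i, 0 ≤ D i i) (hA : A = U * D * Vᵀ) :
    (∀ R : Matrix (Fin m) (Fin m) ℝ, Rᵀ * R = 1 →
      Matrix.trace (Aᵀ * R) ≤ Matrix.trace D) ∧
    Matrix.trace (Aᵀ * (U * Vᵀ)) = Matrix.trace D := by
  have hDT : Dᵀ = D := by
    ext i j
    by_cases h : i = j
    · subst h; rfl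
    · rw [transpose_apply, hD h, hD (fun he => h he.symm)]
  have hUU : U * Uᵀ = 1 := mul_eq_one_comm.mp hU
  have hAT : Aᵀ = V * D * Uᵀ := by
    rw [hA, transpose_mul, transpose_mul, transpose_transpose, hDT, mul_assoc]
  constructor
  · intro R hR
    set W : Matrix (Fin m) (Fin m) ℝ := Uᵀ * R * V with hW
    have hWW : Wᵀ * W = 1 := by
      have : Wᵀ * W = Vᵀ * (Rᵀ * (U * Uᵀ) * R) * V := by
        simp [hW, transpose_mul, Matrix.mul_assoc]
      rw [this, hUU, mul_one, hR, mul_one, hV]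
    have hWle : ∀ i, W i i ≤ 1 := by
      intro i
      have h1 : (Wᵀ * W) i i = 1 := by rw [hWW]; simp
      have h2 : ∑ k, W k i * W k i = 1 := by
        simpa [Matrix.mul_apply] using h1
      have hsq : W i i * W i i ≤ 1 := by
        rw [← h2]
        simpa using Finset.single_le_sum (f := fun k => W k i * W k i)
          (fun k _ => mul_self_nonneg _) (Finset.mem_univ i)
      nlinarith [hsq]
    have htr : Matrix.trace (Aᵀ * R) = Matrix.trace (D * W) := by
      rw [hAT, mul_assoc, mul_assoc, Matrix.trace_mul_comm, hW,
        Matrix.mul_assoc, Matrix.mul_assoc]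
    rw [htr, Matrix.trace]
    have hdiag : ∀ i, (D * W).diag i = D i i * W i i := by
      intro i
      simp only [Matrix.diag, Matrix.mul_apply]
      refine Finset.sum_eq_single i (fun j _ hj => ?_) (by simp)
      rw [hD (fun he => hj he.symm), zero_mul]
    rw [Matrix.trace]
    refine Finset.sum_le_sum fun i _ => ?_
    rw [hdiag i]
    simp only [Matrix.diag]
    nlinarith [hWle i, hDpos i]
  · rw [hAT, mul_assoc, mul_assoc, ← mul_assoc Uᵀ, hU, one_mul,
      Matrix.trace_mul_comm, mul_assoc, hV, mul_one]
end

section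
/- The orthogonal Procrustes problem: for X, M ∈ ℝ^{n×m}, the minimum over R ∈ O(m) of ‖XR − M‖_F² is attained at R = UVᵀ, where UDVᵀ is a singular value decomposition of XᵀM. -/
open Matrix

lemma orth_diag_le_one {m : ℕ} (Q : Matrix (Fin m) (Fin m) ℝ)
    (hQ : Q * Qᵀ = 1) (i : Fin m) : Q i i ≤ 1 := by
  have h : ∑ j, Q i j * Q i j = 1 := by
    have := congrFun (congrFun hQ i) i
    simpa [Matrix.mul_apply, Matrix.transpose_apply, Matrix.one_apply] using this
  have hsq : Q i i * Q i i ≤ 1 := by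
    calc Q i i * Q i i ≤ ∑ j, Q i j * Q i j := by
          exact Finset.single_le_sum (f := fun j => Q i j * Q i j)
            (fun j _ => mul_self_nonneg _) (Finset.mem_univ i)
      _ = 1 := h
  nlinarith [mul_self_nonneg (Q i i - 1)]

lemma trace_mul_diag_le {m : ℕ} (Q D : Matrix (Fin m) (Fin m) ℝ)
    (hD : D.IsDiag) (hDpos : ∀ i, 0 ≤ D i i) (hQ : ∀ i, Q i i ≤ 1) :
    Matrix.trace (Q * D) ≤ Matrix.trace D := by
  rw [Matrix.trace, Matrix.trace]
  apply Finset.sum_le_sum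
  intro i _
  have : (Q * D) i i = ∑ j, Q i j * D j i := Matrix.mul_apply
  rw [Matrix.diag_apply, this]
  have hsum : ∑ j, Q i j * D j i = Q i i * D i i := by
    rw [Finset.sum_eq_single i]
    · intro j _ hj; rw [hD hj, mul_zero]
    · intro h; exact absurd (Finset.mem_univ i) h
  rw [hsum, Matrix.diag_apply]
  calc Q i i * D i i ≤ 1 * D i i := mul_le_mul_of_nonneg_right (hQ i) (hDpos i)
    _ = D i i := one_mul _

theorem stmt10 (n m : ℕ) (X M : Matrix (Fin n) (Fin m) ℝ)
    (U D V : Matrix (Fin m) (Fin m) ℝ)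
    (hU : Uᵀ * U = 1) (hV : Vᵀ * V = 1) (hD : D.IsDiag)
    (hDpos : ∀ i, 0 ≤ D i i) (hSVD : Xᵀ * M = U * D * Vᵀ) :
    ∀ R : Matrix (Fin m) (Fin m) ℝ, Rᵀ * R = 1 →
      frobSq (X * (U * Vᵀ) - M) ≤ frobSq (X * R - M) := by
  intro R hR
  have hRR : R * Rᵀ = 1 := mul_eq_one_comm.mp hR
  have hUU : U * Uᵀ = 1 := mul_eq_one_comm.mp hU
  have hVV : V * Vᵀ = 1 := mul_eq_one_comm.mp hV
  -- expansion of frobSq for orthogonal S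
  have key : ∀ S : Matrix (Fin m) (Fin m) ℝ, S * Sᵀ = 1 →
      frobSq (X * S - M) = Matrix.trace (Xᵀ * X) + Matrix.trace (Mᵀ * M)
        - 2 * Matrix.trace (Sᵀ * (Xᵀ * M)) := by
    intro S hS
    unfold frobSq
    have h1 : (X * S - M)ᵀ * (X * S - M)
        = Sᵀ * (Xᵀ * X) * S - Sᵀ * (Xᵀ * M) - (Mᵀ * X) * S + Mᵀ * M := by
      rw [Matrix.transpose_sub, Matrix.transpose_mul]
      simp only [Matrix.sub_mul, Matrix.mul_sub, Matrix.mul_assoc]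
      abel
    rw [h1]
    rw [Matrix.trace_add, Matrix.trace_sub, Matrix.trace_sub]
    have h2 : Matrix.trace (Sᵀ * (Xᵀ * X) * S) = Matrix.trace (Xᵀ * X) := by
      rw [Matrix.trace_mul_cycle, hS, Matrix.one_mul]
    have h3 : Matrix.trace (Mᵀ * X * S) = Matrix.trace (Sᵀ * (Xᵀ * M)) := by
      have : (Sᵀ * (Xᵀ * M))ᵀ = Mᵀ * X * S := by
        rw [Matrix.transpose_mul, Matrix.transpose_mul, Matrix.transpose_transpose,
          Matrix.transpose_transpose, Matrix.mul_assoc]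
      rw [← this, Matrix.trace_transpose]
    rw [h2, h3]; ring
  have hUV : (U * Vᵀ) * (U * Vᵀ)ᵀ = 1 := by
    rw [Matrix.transpose_mul, Matrix.transpose_transpose]
    calc U * Vᵀ * (V * Uᵀ) = U * (Vᵀ * V) * Uᵀ := by
          rw [Matrix.mul_assoc, Matrix.mul_assoc, Matrix.mul_assoc]
      _ = 1 := by rw [hV, Matrix.mul_one, hUU]
  rw [key _ hUV, key _ hRR]
  have hgoal : Matrix.trace (Rᵀ * (Xᵀ * M)) ≤ Matrix.trace ((U * Vᵀ)ᵀ * (Xᵀ * M)) := by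
    have hleft : Matrix.trace ((U * Vᵀ)ᵀ * (Xᵀ * M)) = Matrix.trace D := by
      rw [hSVD, Matrix.transpose_mul, Matrix.transpose_transpose]
      have : V * Uᵀ * (U * D * Vᵀ) = V * D * Vᵀ := by
        rw [show V * Uᵀ * (U * D * Vᵀ) = V * (Uᵀ * U) * (D * Vᵀ) by
          simp only [Matrix.mul_assoc], hU, Matrix.mul_one, Matrix.mul_assoc]
      rw [this, Matrix.trace_mul_cycle, hV, Matrix.one_mul]
    have hright : Matrix.trace (Rᵀ * (Xᵀ * M))
        = Matrix.trace ((Vᵀ * Rᵀ * U) * D) := by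
      rw [hSVD]
      rw [show Rᵀ * (U * D * Vᵀ) = (Rᵀ * U * D) * Vᵀ by simp only [Matrix.mul_assoc]]
      rw [Matrix.trace_mul_cycle]
      simp only [Matrix.mul_assoc]
    rw [hleft, hright]
    apply trace_mul_diag_le _ _ hD hDpos
    intro i
    apply orth_diag_le_one
    rw [Matrix.transpose_mul, Matrix.transpose_mul, Matrix.transpose_transpose,
      Matrix.transpose_transpose]
    calc Vᵀ * Rᵀ * U * (Uᵀ * (R * V)) = Vᵀ * (Rᵀ * ((U * Uᵀ) * (R * V))) := by
          simp only [Matrix.mul_assoc]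
      _ = 1 := by rw [hUU, Matrix.one_mul, ← Matrix.mul_assoc Rᵀ R V, hR, Matrix.one_mul, hV]
  linarith
end
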